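/- arXiv:1705.00506 — 2 statements merged into one kernel-verified Lean document; each statement's English description precedes it below -/
import Mathlib

section
/- Under consistency, positivity, unconfoundedness, exclusion restriction, monotonicity, and instrumentation (E(A | Z=1) ≠ E(A | Z=0)), the Wald ratio Ψ^f = [E(Y|Z=1) - E(Y|Z=0)] / [E(A|Z=1) - E(A|Z=0)] equals the local average treatment effect E(Y_{a=1} - Y_{a=0} | A_{z=1} > A_{z=0}) among compliers. -/
open MeasureTheory ProbabilityTheory
open scoped ENNReal

/-- Conditional expectation of `f` given the event `s`: `E(f | s)`. -/
noncomputable def cexp {Ω : Type*} [MeasurableSpace Ω] (μ : Measure Ω) (f : Ω → ℝ) (s : Set Ω) : ℝ :=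
  (∫ ω in s, f ω ∂μ) / (μ s).toReal

/-! Since `Z` is independent of `(A_{z=0}, A_{z=1}, Y_{z=0}, Y_{z=1})`, conditioning on `Z = z`
leaves the means of the potential outcomes unchanged, so by consistency `E(Y | Z = z) = E(Y_z)` and
`E(A | Z = z) = E(A_z)`. Under monotonicity, `A_{z=1} - A_{z=0}` is the indicator of the compliers
`C = {A_{z=0} < A_{z=1}}`, and by the exclusion restriction `Y_{z=1} - Y_{z=0}` is `Y_1 - Y_0` on
`C` and `0` off it. Hence the Wald numerator is `∫_C (Y_1 - Y_0)` and the denominator is `P(C)`. -/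

section

variable {Ω : Type*} [MeasurableSpace Ω] {μ : Measure Ω}

lemma cexp_congr {f g : Ω → ℝ} {s : Set Ω} (hs : MeasurableSet s) (hfg : Set.EqOn f g s) :
    cexp μ f s = cexp μ g s := by
  rw [cexp, cexp, setIntegral_congr_fun hs hfg]

lemma cexp_preimage_eq_integral_of_indepFun {β : Type*} [MeasurableSpace β] {X : Ω → β}
    {W : Ω → ℝ} [IsFiniteMeasure μ] (hX : Measurable X) (hW : AEMeasurable W μ)
    (hXW : IndepFun X W μ) {t : Set β} (ht : MeasurableSet t) (hpos : μ (X ⁻¹' t) ≠ 0) :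
    cexp μ W (X ⁻¹' t) = ∫ ω, W ω ∂μ := by
  have hsplit : ∫ ω in X ⁻¹' t, W ω ∂μ = μ.real (X ⁻¹' t) * ∫ ω, W ω ∂μ :=
    ((IndepFun_iff_Indep X W μ).1 hXW).setIntegral_eq_mul hX.comap_le (f := id) hW ⟨t, ht, rfl⟩
      aestronglyMeasurable_id
  rw [cexp, hsplit, ← Measure.real, mul_div_cancel_left₀]
  exact (measureReal_ne_zero_iff (measure_ne_top μ _)).2 hpos

lemma ite_sub_ite_of_le {a₀ a₁ : ℝ} (h₀ : a₀ = 0 ∨ a₀ = 1) (h₁ : a₁ = 0 ∨ a₁ = 1)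
    (hle : a₀ ≤ a₁) (y₀ y₁ : ℝ) :
    (if a₁ = 1 then y₁ else y₀) - (if a₀ = 1 then y₁ else y₀) =
      if a₀ < a₁ then y₁ - y₀ else 0 := by
  rcases h₀ with rfl | rfl <;> rcases h₁ with rfl | rfl <;> norm_num at *

lemma sub_eq_ite_of_le {a₀ a₁ : ℝ} (h₀ : a₀ = 0 ∨ a₀ = 1) (h₁ : a₁ = 0 ∨ a₁ = 1)
    (hle : a₀ ≤ a₁) : a₁ - a₀ = if a₀ < a₁ then 1 else 0 := by
  rcases h₀ with rfl | rfl <;> rcases h₁ with rfl | rfl <;> norm_num at *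

section Compliers

variable {A₀ A₁ : Ω → ℝ} (hA₀ : ∀ᵐ ω ∂μ, A₀ ω = 0 ∨ A₀ ω = 1)
  (hA₁ : ∀ᵐ ω ∂μ, A₁ ω = 0 ∨ A₁ ω = 1) (hmono : ∀ᵐ ω ∂μ, A₀ ω ≤ A₁ ω)
include hA₀ hA₁ hmono

lemma integral_sub_eq_setIntegral_compliers (hA₀m : Measurable A₀) (hA₁m : Measurable A₁)
    {Y₀ Y₁ : Ω → ℝ} (h₀ : Integrable (fun ω => if A₀ ω = 1 then Y₁ ω else Y₀ ω) μ)
    (h₁ : Integrable (fun ω => if A₁ ω = 1 then Y₁ ω else Y₀ ω) μ) :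
    (∫ ω, (if A₁ ω = 1 then Y₁ ω else Y₀ ω) ∂μ) - ∫ ω, (if A₀ ω = 1 then Y₁ ω else Y₀ ω) ∂μ =
      ∫ ω in {ω | A₀ ω < A₁ ω}, (Y₁ ω - Y₀ ω) ∂μ := by
  rw [← integral_sub h₁ h₀, ← integral_indicator (measurableSet_lt hA₀m hA₁m)]
  refine integral_congr_ae ?_
  filter_upwards [hA₀, hA₁, hmono] with ω h₀ h₁ hle
  rw [ite_sub_ite_of_le h₀ h₁ hle]
  rfl

lemma integral_sub_eq_measureReal_compliers [IsFiniteMeasure μ] (hA₀m : Measurable A₀)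
    (hA₁m : Measurable A₁) :
    (∫ ω, A₁ ω ∂μ) - ∫ ω, A₀ ω ∂μ = μ.real {ω | A₀ ω < A₁ ω} := by
  have integrable {A : Ω → ℝ} (hAm : Measurable A) (hA : ∀ᵐ ω ∂μ, A ω = 0 ∨ A ω = 1) :
      Integrable A μ :=
    .of_bound hAm.aestronglyMeasurable 1 <| by
      filter_upwards [hA] with ω h
      rcases h with h | h <;> simp [h]
  rw [← integral_sub (integrable hA₁m hA₁) (integrable hA₀m hA₀),
    ← integral_indicator_one (measurableSet_lt hA₀m hA₁m)]
  refine integral_congr_ae ?_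
  filter_upwards [hA₀, hA₁, hmono] with ω h₀ h₁ hle
  rw [sub_eq_ite_of_le h₀ h₁ hle]
  rfl

end Compliers

end

theorem stmt2_general {Ω : Type*} [MeasurableSpace Ω] (μ : Measure Ω) [IsProbabilityMeasure μ]
    (Z A A0 A1 Y Y0 Y1 Yz0 Yz1 : Ω → ℝ)
    (hZm : Measurable Z) (hA0m : Measurable A0) (hA1m : Measurable A1)
    (hZbin : ∀ ω, Z ω = 0 ∨ Z ω = 1)
    (hA0bin : ∀ ω, A0 ω = 0 ∨ A0 ω = 1)
    (hA1bin : ∀ ω, A1 ω = 0 ∨ A1 ω = 1)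
    -- consistency: A = A_z and Y = Y_z = Y_{a=A_z} on {Z = z}
    (hcons1 : ∀ ω, Z ω = 1 → A ω = A1 ω ∧ Y ω = Yz1 ω)
    (hcons0 : ∀ ω, Z ω = 0 → A ω = A0 ω ∧ Y ω = Yz0 ω)
    -- exclusion restriction: Y_{za} = Y_a, i.e. Y_z = Y_{A_z}
    (hexcl1 : ∀ ω, Yz1 ω = if A1 ω = 1 then Y1 ω else Y0 ω)
    (hexcl0 : ∀ ω, Yz0 ω = if A0 ω = 1 then Y1 ω else Y0 ω)
    -- positivity
    (hpos : 0 < μ {ω | Z ω = 1}) (hpos' : μ {ω | Z ω = 1} < 1)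
    -- unconfoundedness of the instrument
    (hindep : IndepFun Z (fun ω => (A0 ω, A1 ω, Yz0 ω, Yz1 ω)) μ)
    -- monotonicity
    (hmono : ∀ᵐ ω ∂μ, A0 ω ≤ A1 ω)
    -- integrability
    (hYz0int : Integrable Yz0 μ) (hYz1int : Integrable Yz1 μ) :
    (cexp μ Y {ω | Z ω = 1} - cexp μ Y {ω | Z ω = 0}) /
        (cexp μ A {ω | Z ω = 1} - cexp μ A {ω | Z ω = 0}) =
      cexp μ (fun ω => Y1 ω - Y0 ω) {ω | A0 ω < A1 ω} := by
  have hZ₁ : MeasurableSet {ω | Z ω = 1} := hZm (measurableSet_singleton 1)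
  have hZ₀ : MeasurableSet {ω | Z ω = 0} := hZm (measurableSet_singleton 0)
  have hpos₀ : μ {ω | Z ω = 0} ≠ 0 := by
    rw [show {ω | Z ω = 0} = {ω | Z ω = 1}ᶜ by ext ω; rcases hZbin ω with h | h <;> simp [h],
      Ne, prob_compl_eq_zero_iff hZ₁]
    exact hpos'.ne
  have hE {W : Ω → ℝ} (hW : AEMeasurable W μ) (hZW : IndepFun Z W μ) {z : ℝ}
      (hz : μ {ω | Z ω = z} ≠ 0) : cexp μ W {ω | Z ω = z} = ∫ ω, W ω ∂μ :=
    cexp_preimage_eq_integral_of_indepFun hZm hW hZW (measurableSet_singleton z) hz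
  have hZA₀ : IndepFun Z A0 μ := hindep.comp measurable_id measurable_fst
  have hZA₁ : IndepFun Z A1 μ := hindep.comp measurable_id (measurable_fst.comp measurable_snd)
  have hZYz₀ : IndepFun Z Yz0 μ :=
    hindep.comp measurable_id (measurable_fst.comp (measurable_snd.comp measurable_snd))
  have hZYz₁ : IndepFun Z Yz1 μ :=
    hindep.comp measurable_id (measurable_snd.comp (measurable_snd.comp measurable_snd))
  rw [cexp_congr hZ₁ fun ω h => (hcons1 ω h).2, cexp_congr hZ₀ fun ω h => (hcons0 ω h).2,
    cexp_congr hZ₁ fun ω h => (hcons1 ω h).1, cexp_congr hZ₀ fun ω h => (hcons0 ω h).1,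
    hE hYz1int.aemeasurable hZYz₁ hpos.ne', hE hYz0int.aemeasurable hZYz₀ hpos₀,
    hE hA1m.aemeasurable hZA₁ hpos.ne', hE hA0m.aemeasurable hZA₀ hpos₀]
  obtain rfl : Yz1 = _ := funext hexcl1
  obtain rfl : Yz0 = _ := funext hexcl0
  have hA₀ := ae_of_all μ hA0bin
  have hA₁ := ae_of_all μ hA1bin
  rw [integral_sub_eq_setIntegral_compliers hA₀ hA₁ hmono hA0m hA1m hYz0int hYz1int,
    integral_sub_eq_measureReal_compliers hA₀ hA₁ hmono hA0m hA1m]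
  rfl

/-- Under consistency, positivity, unconfoundedness, exclusion restriction, monotonicity,
and instrumentation, the Wald ratio
`Ψᶠ = [E(Y|Z=1) - E(Y|Z=0)] / [E(A|Z=1) - E(A|Z=0)]` equals the local average treatment
effect `E(Y₁ - Y₀ | A_{z=1} > A_{z=0})` among compliers. -/
theorem stmt2 {Ω : Type*} [MeasurableSpace Ω] (μ : Measure Ω) [IsProbabilityMeasure μ]
    (Z A A0 A1 Y Y0 Y1 Yz0 Yz1 : Ω → ℝ)
    (hZm : Measurable Z) (hAm : Measurable A) (hA0m : Measurable A0) (hA1m : Measurable A1)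
    (hYm : Measurable Y) (hY0m : Measurable Y0) (hY1m : Measurable Y1)
    (hYz0m : Measurable Yz0) (hYz1m : Measurable Yz1)
    (hZbin : ∀ ω, Z ω = 0 ∨ Z ω = 1)
    (hAbin : ∀ ω, A ω = 0 ∨ A ω = 1)
    (hA0bin : ∀ ω, A0 ω = 0 ∨ A0 ω = 1)
    (hA1bin : ∀ ω, A1 ω = 0 ∨ A1 ω = 1)
    -- consistency: A = A_z and Y = Y_z = Y_{a=A_z} on {Z = z}
    (hcons1 : ∀ ω, Z ω = 1 → A ω = A1 ω ∧ Y ω = Yz1 ω)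
    (hcons0 : ∀ ω, Z ω = 0 → A ω = A0 ω ∧ Y ω = Yz0 ω)
    -- exclusion restriction: Y_{za} = Y_a, i.e. Y_z = Y_{A_z}
    (hexcl1 : ∀ ω, Yz1 ω = if A1 ω = 1 then Y1 ω else Y0 ω)
    (hexcl0 : ∀ ω, Yz0 ω = if A0 ω = 1 then Y1 ω else Y0 ω)
    -- positivity
    (hpos : 0 < μ {ω | Z ω = 1}) (hpos' : μ {ω | Z ω = 1} < 1)
    -- instrumentation: P(A_{z=1}=1) ≠ P(A_{z=0}=1)
    (hinstr : μ {ω | A1 ω = 1} ≠ μ {ω | A0 ω = 1})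
    -- unconfoundedness of the instrument
    (hindep : IndepFun Z (fun ω => (A0 ω, A1 ω, Yz0 ω, Yz1 ω)) μ)
    -- monotonicity
    (hmono : ∀ᵐ ω ∂μ, A0 ω ≤ A1 ω)
    -- integrability
    (hYint : Integrable Y μ) (hY0int : Integrable Y0 μ) (hY1int : Integrable Y1 μ)
    (hYz0int : Integrable Yz0 μ) (hYz1int : Integrable Yz1 μ) :
    (cexp μ Y {ω | Z ω = 1} - cexp μ Y {ω | Z ω = 0}) /
        (cexp μ A {ω | Z ω = 1} - cexp μ A {ω | Z ω = 0}) =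
      cexp μ (fun ω => Y1 ω - Y0 ω) {ω | A0 ω < A1 ω} :=
  stmt2_general μ Z A A0 A1 Y Y0 Y1 Yz0 Yz1 hZm hA0m hA1m hZbin hA0bin hA1bin hcons1 hcons0 hexcl1
    hexcl0 hpos hpos' hindep hmono hYz0int hYz1int
end

section
/- The complete-case variance Var(R·D/p) = Var(D)/p exceeds the MCAR efficiency bound Var(D*) = Var(D)/p − ((1−p)/p)Var(E[D|A,Y]) strictly, unless E[D | A,Y] is almost surely constant (equal to 0) or p = 1. -/
/-!
Write `g = E[D | A,Y]` and `e = D - g`. If `R ∈ {0,1}` with `E R = p` is independent of `(U, V)`,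
then `R² = R` and independence give
`Var((R/p)·U + V) = Var(U + V) + ((1-p)/p)·E[U²]`.
The complete-case estimator is the case `U = D, V = 0` and `D*` the case `U = e, V = g`; in both
`U + V = D`, so the gap between the variances is `((1-p)/p)·(E[D²] - E[e²]) = ((1-p)/p)·E[g²]`
(Pythagoras for the conditional expectation), which is positive unless `g = 0` a.e.
-/

open MeasureTheory ProbabilityTheory
open scoped ENNReal

/-- The σ-algebra generated by the pair `(A, Y)`. -/
def sigmaAY {Ω : Type*} (A Y : Ω → ℝ) : MeasurableSpace Ω :=
  MeasurableSpace.comap (fun ω => (A ω, Y ω)) inferInstance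

namespace ProbabilityTheory

variable {Ω : Type*} {m m₀ : MeasurableSpace Ω} {μ : Measure Ω}

theorem integral_sub_condExp_sq (hm : m ≤ m₀) [IsFiniteMeasure μ] {X : Ω → ℝ}
    (hX : MemLp X 2 μ) :
    ∫ ω, (X ω - (μ[X | m]) ω) ^ 2 ∂μ = ∫ ω, X ω ^ 2 ∂μ - ∫ ω, (μ[X | m]) ω ^ 2 ∂μ := by
  calc ∫ ω, (X ω - (μ[X | m]) ω) ^ 2 ∂μ = ∫ ω, (Var[X; μ | m]) ω ∂μ :=
        (integral_condExp hm).symm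
    _ = ∫ ω, ((μ[X ^ 2 | m]) ω - (μ[X | m]) ω ^ 2) ∂μ :=
        integral_congr_ae (condVar_ae_eq_condExp_sq_sub_sq_condExp hm hX)
    _ = ∫ ω, X ω ^ 2 ∂μ - ∫ ω, (μ[X | m]) ω ^ 2 ∂μ := by
        rw [integral_sub integrable_condExp (hX.condExp one_le_two).integrable_sq,
          integral_condExp hm]
        rfl

theorem integral_eq_measureReal_of_zero_or_one {R : Ω → ℝ} (hRm : Measurable R)
    (hR : ∀ ω, R ω = 0 ∨ R ω = 1) : ∫ ω, R ω ∂μ = μ.real {ω | R ω = 1} := by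
  have hR_ind : R = {ω | R ω = 1}.indicator 1 := by
    funext ω
    rcases hR ω with h | h <;> simp [Set.indicator, h]
  conv_lhs => rw [hR_ind]
  exact integral_indicator_one (hRm (measurableSet_singleton 1))

theorem IndepFun.of_measurable_comap {β γ δ : Type*} [MeasurableSpace β] [mγ : MeasurableSpace γ]
    [MeasurableSpace δ] {R : Ω → β} {T : Ω → γ} {X : Ω → δ} (h : IndepFun R T μ)
    (hX : Measurable[MeasurableSpace.comap T mγ] X) : IndepFun R X μ := by
  rw [IndepFun_iff_Indep] at h ⊢
  exact indep_of_indep_of_le_right h hX.comap_le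

theorem IndepFun.integral_div_mul {R X : Ω → ℝ} {p : ℝ} (hind : IndepFun R X μ)
    (hR : AEStronglyMeasurable R μ) (hX : AEStronglyMeasurable X μ) (hp : ∫ ω, R ω ∂μ = p)
    (hp0 : p ≠ 0) : ∫ ω, R ω / p * X ω ∂μ = ∫ ω, X ω ∂μ := by
  simp_rw [div_mul_eq_mul_div]
  have hprod : ∫ ω, R ω * X ω ∂μ = (∫ ω, R ω ∂μ) * ∫ ω, X ω ∂μ :=
    hind.integral_mul_eq_mul_integral hR hX
  rw [integral_div, hprod, hp, mul_div_cancel_left₀ _ hp0]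

theorem memLp_top_div_of_zero_or_one {R : Ω → ℝ} (hR : ∀ ω, R ω = 0 ∨ R ω = 1)
    (hRm : Measurable R) (p : ℝ) : MemLp (fun ω => R ω / p) ∞ μ :=
  memLp_top_of_bound (hRm.div_const p).aestronglyMeasurable |p|⁻¹ <| ae_of_all _ fun ω => by
    rcases hR ω with h | h <;> simp [h]

theorem integral_sq_div_mul_add_of_indepFun [IsFiniteMeasure μ] {R U V : Ω → ℝ} {p : ℝ}
    (hR : ∀ ω, R ω = 0 ∨ R ω = 1) (hRm : Measurable R) (hp : ∫ ω, R ω ∂μ = p) (hp0 : p ≠ 0)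
    (hU : MemLp U 2 μ) (hV : MemLp V 2 μ) (hind : IndepFun R (fun ω => (U ω, V ω)) μ) :
    ∫ ω, (R ω / p * U ω + V ω) ^ 2 ∂μ
      = ∫ ω, (U ω + V ω) ^ 2 ∂μ + (1 - p) / p * ∫ ω, U ω ^ 2 ∂μ := by
  have hF : Integrable (fun ω => U ω ^ 2 / p + 2 * (U ω * V ω)) μ :=
    (hU.integrable_sq.div_const p).add ((hU.integrable_mul hV).const_mul 2)
  have hind_F : IndepFun R (fun ω => U ω ^ 2 / p + 2 * (U ω * V ω)) μ :=
    hind.comp (ψ := fun x : ℝ × ℝ => x.1 ^ 2 / p + 2 * (x.1 * x.2)) measurable_id (by fun_prop)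
  have hRF : Integrable (fun ω => R ω / p * (U ω ^ 2 / p + 2 * (U ω * V ω))) μ :=
    hF.mul_of_top_right (memLp_top_div_of_zero_or_one hR hRm p)
  calc ∫ ω, (R ω / p * U ω + V ω) ^ 2 ∂μ
      = ∫ ω, (R ω / p * (U ω ^ 2 / p + 2 * (U ω * V ω)) + V ω ^ 2) ∂μ := by
        congr 1 with ω
        -- `R² = R` leaves `R / p` times a function of `(U, V)`
        have hR_sq : R ω ^ 2 = R ω := by rcases hR ω with h | h <;> simp [h]
        linear_combination (U ω ^ 2 / p ^ 2) * hR_sq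
    _ = ∫ ω, (U ω ^ 2 / p + 2 * (U ω * V ω)) ∂μ + ∫ ω, V ω ^ 2 ∂μ := by
        rw [integral_add hRF hV.integrable_sq,
          hind_F.integral_div_mul hRm.aestronglyMeasurable hF.1 hp hp0]
    _ = ∫ ω, ((U ω + V ω) ^ 2 + (1 - p) / p * U ω ^ 2) ∂μ := by
        rw [← integral_add hF hV.integrable_sq]
        congr 1 with ω
        field_simp
        ring
    _ = ∫ ω, (U ω + V ω) ^ 2 ∂μ + (1 - p) / p * ∫ ω, U ω ^ 2 ∂μ := by
        have hUV : MemLp (fun ω => U ω + V ω) 2 μ := hU.add hV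
        rw [integral_add hUV.integrable_sq (hU.integrable_sq.const_mul _),
          integral_const_mul]

theorem variance_div_mul_add_of_indepFun [IsProbabilityMeasure μ] {R U V : Ω → ℝ} {p : ℝ}
    (hR : ∀ ω, R ω = 0 ∨ R ω = 1) (hRm : Measurable R) (hp : ∫ ω, R ω ∂μ = p) (hp0 : p ≠ 0)
    (hU : MemLp U 2 μ) (hV : MemLp V 2 μ) (hind : IndepFun R (fun ω => (U ω, V ω)) μ) :
    variance (fun ω => R ω / p * U ω + V ω) μ
      = variance (fun ω => U ω + V ω) μ + (1 - p) / p * ∫ ω, U ω ^ 2 ∂μ := by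
  have hRU : MemLp (fun ω => R ω / p * U ω) 2 μ :=
    hU.mul' (memLp_top_div_of_zero_or_one hR hRm p)
  have hW : MemLp (fun ω => R ω / p * U ω + V ω) 2 μ := hRU.add hV
  have hUV : MemLp (fun ω => U ω + V ω) 2 μ := hU.add hV
  have h_mean : ∫ ω, (R ω / p * U ω + V ω) ∂μ = ∫ ω, (U ω + V ω) ∂μ := by
    have hind_U : IndepFun R U μ := hind.comp measurable_id measurable_fst
    rw [integral_add (hRU.integrable one_le_two) (hV.integrable one_le_two),
      integral_add (hU.integrable one_le_two) (hV.integrable one_le_two),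
      hind_U.integral_div_mul hRm.aestronglyMeasurable hU.1 hp hp0]
  rw [variance_eq_sub hW, variance_eq_sub hUV]
  simp only [Pi.pow_apply]
  rw [h_mean, integral_sq_div_mul_add_of_indepFun hR hRm hp hp0 hU hV hind]
  ring

end ProbabilityTheory

theorem stmt9_general {Ω : Type*} [MeasurableSpace Ω] (μ : Measure Ω) [IsProbabilityMeasure μ]
    (A Y D R : Ω → ℝ)
    (hAm : Measurable A) (hYm : Measurable Y) (hRm : Measurable R)
    (hD2 : MemLp D 2 μ)
    (hRbin : ∀ ω, R ω = 0 ∨ R ω = 1)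
    (hindep : IndepFun R (fun ω => (A ω, Y ω, D ω)) μ)
    (p : ℝ) (hp : p = (μ {ω | R ω = 1}).toReal) (hppos : 0 < p) (hplt : p < 1)
    (Dstar : Ω → ℝ)
    (hDstar : Dstar = fun ω =>
      (R ω / p) * (D ω - (μ[D | sigmaAY A Y]) ω) + (μ[D | sigmaAY A Y]) ω)
    -- E[D | A,Y] is not almost surely constant (equal to 0)
    (hnc : ¬ (μ[D | sigmaAY A Y] =ᵐ[μ] fun _ => (0 : ℝ))) :
    variance Dstar μ < variance (fun ω => R ω * D ω / p) μ := by
  set g := μ[D | sigmaAY A Y]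
  set T : Ω → ℝ × ℝ × ℝ := fun ω => (A ω, Y ω, D ω)
  have hm : sigmaAY A Y ≤ ‹_› := (hAm.prodMk hYm).comap_le
  have hAY_T : Measurable[MeasurableSpace.comap T inferInstance] fun ω => (A ω, Y ω) :=
    (measurable_fst.prodMk (measurable_fst.comp measurable_snd)).comp (comap_measurable T)
  have hD_T : Measurable[MeasurableSpace.comap T inferInstance] D :=
    (measurable_snd.comp measurable_snd).comp (comap_measurable T)
  have hg_T : Measurable[MeasurableSpace.comap T inferInstance] g :=
    stronglyMeasurable_condExp.measurable.mono hAY_T.comap_le le_rfl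
  have hRp : ∫ ω, R ω ∂μ = p := by
    rw [integral_eq_measureReal_of_zero_or_one hRm hRbin, hp, measureReal_def]
  have hg2 : MemLp g 2 μ := hD2.condExp one_le_two
  have h_cc : variance (fun ω => R ω * D ω / p) μ
      = variance D μ + (1 - p) / p * ∫ ω, D ω ^ 2 ∂μ := by
    have := variance_div_mul_add_of_indepFun hRbin hRm hRp hppos.ne' hD2 MemLp.zero
      (hindep.of_measurable_comap (hD_T.prodMk measurable_const))
    simp only [Pi.zero_apply, add_zero] at this
    rw [← this]
    congr 1 with ω
    ring
  have h_star : variance Dstar μ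
      = variance D μ + (1 - p) / p * ∫ ω, (D ω - g ω) ^ 2 ∂μ := by
    have := variance_div_mul_add_of_indepFun hRbin hRm hRp hppos.ne' (hD2.sub hg2) hg2
      (hindep.of_measurable_comap ((hD_T.sub hg_T).prodMk hg_T))
    simpa only [hDstar, Pi.sub_apply, sub_add_cancel] using this
  have hg_sq_pos : 0 < ∫ ω, g ω ^ 2 ∂μ := by
    refine (integral_nonneg fun ω => sq_nonneg (g ω)).lt_of_ne fun h => hnc ?_
    filter_upwards [(integral_eq_zero_iff_of_nonneg (fun ω => sq_nonneg (g ω))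
      hg2.integrable_sq).mp h.symm] with ω hω
    exact pow_eq_zero_iff two_ne_zero |>.mp hω
  have hc : 0 < (1 - p) / p := div_pos (sub_pos.mpr hplt) hppos
  rw [h_star, h_cc, integral_sub_condExp_sq hm hD2]
  linarith [mul_pos hc hg_sq_pos]

/-- With `p = P(R=1) ∈ (0,1)`, the complete-case variance `Var(R·D/p) = Var(D)/p` strictly
exceeds the MCAR efficiency bound `Var(D*)` unless `E[D|A,Y]` is almost surely constant
(equal to `0`). -/
theorem stmt9 {Ω : Type*} [MeasurableSpace Ω] (μ : Measure Ω) [IsProbabilityMeasure μ]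
    (A Y D R : Ω → ℝ)
    (hAm : Measurable A) (hYm : Measurable Y) (hDm : Measurable D) (hRm : Measurable R)
    (hD2 : MemLp D 2 μ) (hDmean : ∫ ω, D ω ∂μ = 0)
    (hRbin : ∀ ω, R ω = 0 ∨ R ω = 1)
    (hindep : IndepFun R (fun ω => (A ω, Y ω, D ω)) μ)
    (p : ℝ) (hp : p = (μ {ω | R ω = 1}).toReal) (hppos : 0 < p) (hplt : p < 1)
    (Dstar : Ω → ℝ)
    (hDstar : Dstar = fun ω =>
      (R ω / p) * (D ω - (μ[D | sigmaAY A Y]) ω) + (μ[D | sigmaAY A Y]) ω)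
    -- E[D | A,Y] is not almost surely constant (equal to 0)
    (hnc : ¬ (μ[D | sigmaAY A Y] =ᵐ[μ] fun _ => (0 : ℝ))) :
    variance Dstar μ < variance (fun ω => R ω * D ω / p) μ :=
  stmt9_general μ A Y D R hAm hYm hRm hD2 hRbin hindep p hp hppos hplt Dstar hDstar hnc
end
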